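/- arXiv:1809.09512 — 10 statements merged into one kernel-verified Lean document; each statement's English description precedes it below -/
import Mathlib

section
/- Let X be a finite-dimensional real inner product space and let g : X → ℝ be a convex function (defined on all of X) with min_{x∈X} g(x) < 0. Let R ⊆ X be a bounded set. Then there exists a constant c > 0 such that for every x ∈ R with g(x) ≥ 0 and every subgradient s ∈ ∂g(x), one has ‖s‖ > c. -/
open RealInnerProductSpace

/-- If `g` is a convex function on a finite-dimensional real inner product
space attaining a negative minimum, and `R` is a bounded set, then there is `c > 0`
such that every subgradient of `g` at a point `x ∈ R` with `g x ≥ 0` has norm `> c`. -/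
theorem subgradient_norm_bounded_below
    {X : Type*} [NormedAddCommGroup X] [InnerProductSpace ℝ X] [FiniteDimensional ℝ X]
    (g : X → ℝ) (hg : ConvexOn ℝ Set.univ g)
    (hmin : ∃ x₀ : X, g x₀ < 0 ∧ ∀ x, g x₀ ≤ g x)
    (R : Set X) (hR : Bornology.IsBounded R) :
    ∃ c > (0 : ℝ), ∀ x ∈ R, 0 ≤ g x →
      ∀ s : X, (∀ y : X, g x + ⟪s, y - x⟫ ≤ g y) → c < ‖s‖ := by
  obtain ⟨x₀, hx₀neg, hx₀min⟩ := hmin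
  obtain ⟨r, hr⟩ := hR.subset_closedBall x₀
  set M : ℝ := max r 1 with hM
  have hM1 : (1 : ℝ) ≤ M := le_max_right r 1
  have hMpos : (0 : ℝ) < M := lt_of_lt_of_le one_pos hM1
  refine ⟨(-g x₀) / (2 * M), div_pos (by linarith) (by linarith), ?_⟩
  intro x hxR hgx s hs
  have hdist : ‖x₀ - x‖ ≤ M := by
    have := hr hxR
    rw [Metric.mem_closedBall, dist_eq_norm] at this
    calc ‖x₀ - x‖ = ‖x - x₀‖ := norm_sub_rev _ _
      _ ≤ r := this
      _ ≤ M := le_max_left r 1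
  have key : g x + ⟪s, x₀ - x⟫ ≤ g x₀ := hs x₀
  have h1 : -g x₀ ≤ -⟪s, x₀ - x⟫ := by linarith
  have h2 : -⟪s, x₀ - x⟫ ≤ ‖s‖ * ‖x₀ - x‖ := by
    calc -⟪s, x₀ - x⟫ ≤ |⟪s, x₀ - x⟫| := neg_le_abs _
      _ ≤ ‖s‖ * ‖x₀ - x‖ := abs_real_inner_le_norm _ _
  have h3 : ‖s‖ * ‖x₀ - x‖ ≤ ‖s‖ * M := by
    exact mul_le_mul_of_nonneg_left hdist (norm_nonneg s)
  have h4 : -g x₀ ≤ ‖s‖ * M := by linarith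
  have h5 : (-g x₀) / M ≤ ‖s‖ := by
    rw [div_le_iff₀ hMpos]; linarith
  have h6 : (-g x₀) / (2 * M) < (-g x₀) / M := by
    apply div_lt_div_of_pos_left (by linarith) hMpos
    linarith
  linarith
end

section
/- Let X be a finite-dimensional real inner product space, g : X → ℝ a convex function with min_{x∈X} g(x) < 0, and C := {x ∈ X : g(x) ≤ 0}. Let R ⊆ X be a bounded set and x̄ ∈ R. Then there exists γ > 0 such that: for every closed halfspace H ⊆ X with C ⊆ H, if x denotes the metric projection of x̄ onto H, then whenever g(x) ≥ 0 and s ∈ ∂g(x), one has ‖s‖ ≥ γ. -/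
open RealInnerProductSpace

/-- With `C = {x : g x ≤ 0}` and `x̄` in a bounded set `R`, there is `γ > 0`
such that for every closed halfspace `H ⊇ C`, at the projection `x` of `x̄` onto `H`,
every subgradient of `g` at `x` has norm `≥ γ` whenever `g x ≥ 0`. -/
theorem subgradient_norm_bounded_below_at_halfspace_projection
    {X : Type*} [NormedAddCommGroup X] [InnerProductSpace ℝ X] [FiniteDimensional ℝ X]
    (g : X → ℝ) (hg : ConvexOn ℝ Set.univ g)
    (hmin : ∃ x₀ : X, g x₀ < 0 ∧ ∀ x, g x₀ ≤ g x)
    (C : Set X) (hC : C = {x : X | g x ≤ 0})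
    (R : Set X) (hR : Bornology.IsBounded R) (xbar : X) (hxbar : xbar ∈ R) :
    ∃ γ > (0 : ℝ), ∀ (a : X) (b : ℝ), a ≠ 0 →
      C ⊆ {y : X | ⟪a, y⟫ ≤ b} →
      ∀ x : X, x ∈ {y : X | ⟪a, y⟫ ≤ b} →
        (∀ y ∈ {y : X | ⟪a, y⟫ ≤ b}, ‖xbar - x‖ ≤ ‖xbar - y‖) →
        0 ≤ g x →
        ∀ s : X, (∀ y : X, g x + ⟪s, y - x⟫ ≤ g y) → γ ≤ ‖s‖ := by
  obtain ⟨x₀, hx₀, _⟩ := hmin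
  refine ⟨-g x₀ / (2 * ‖xbar - x₀‖ + 1), div_pos (by linarith) (by positivity), ?_⟩
  intro a b ha hCH x hxH hproj hgx s hs
  have hx₀H : x₀ ∈ {y : X | ⟪a, y⟫ ≤ b} := hCH (by simp [hC, hx₀.le])
  have h1 : ‖xbar - x‖ ≤ ‖xbar - x₀‖ := hproj x₀ hx₀H
  have h2 : ‖x - x₀‖ ≤ 2 * ‖xbar - x₀‖ + 1 := by
    calc ‖x - x₀‖ = ‖(x - xbar) + (xbar - x₀)‖ := by rw [sub_add_sub_cancel]
      _ ≤ ‖x - xbar‖ + ‖xbar - x₀‖ := norm_add_le _ _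
      _ = ‖xbar - x‖ + ‖xbar - x₀‖ := by rw [norm_sub_rev]
      _ ≤ 2 * ‖xbar - x₀‖ + 1 := by linarith
  have h3 : -g x₀ ≤ ⟪s, x - x₀⟫ := by
    have h := hs x₀
    have : ⟪s, x₀ - x⟫ = -⟪s, x - x₀⟫ := by
      rw [← inner_neg_right, neg_sub]
    linarith
  have h4 : ⟪s, x - x₀⟫ ≤ ‖s‖ * ‖x - x₀‖ := real_inner_le_norm s (x - x₀)
  have h5 : ‖s‖ * ‖x - x₀‖ ≤ ‖s‖ * (2 * ‖xbar - x₀‖ + 1) :=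
    mul_le_mul_of_nonneg_left h2 (norm_nonneg s)
  rw [div_le_iff₀ (by positivity)]
  linarith
end

section
/- Let X be a finite-dimensional real inner product space, x̄ ∈ X, H₁ a closed halfspace, and x₁ the metric projection of x̄ onto H₁. Let H₂ be a closed halfspace with H₁ ∩ H₂ nonempty, let d := d(x₁, H₂), and let x₂ be the metric projection of x̄ onto H₁ ∩ H₂. Then ‖x̄ − x₂‖² ≥ ‖x̄ − x₁‖² + d². -/
open RealInnerProductSpace

/-- If `x₁` is the projection of `x̄` onto a closed halfspace `H₁`, `H₂` is
a closed halfspace with `H₁ ∩ H₂ ≠ ∅`, `d = d(x₁, H₂)`, and `x₂` is the projection of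
`x̄` onto `H₁ ∩ H₂`, then `‖x̄ - x₂‖² ≥ ‖x̄ - x₁‖² + d²`. -/
theorem dist_sq_increase_two_halfspaces
    {X : Type*} [NormedAddCommGroup X] [InnerProductSpace ℝ X] [FiniteDimensional ℝ X]
    (xbar : X) (H₁ H₂ : Set X)
    (hH₁ : ∃ (a : X) (b : ℝ), a ≠ 0 ∧ H₁ = {x : X | ⟪a, x⟫ ≤ b})
    (hH₂ : ∃ (a : X) (b : ℝ), a ≠ 0 ∧ H₂ = {x : X | ⟪a, x⟫ ≤ b})
    (hne : (H₁ ∩ H₂).Nonempty)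
    (x₁ : X) (hx₁ : x₁ ∈ H₁) (hx₁proj : ∀ y ∈ H₁, ‖xbar - x₁‖ ≤ ‖xbar - y‖)
    (d : ℝ) (hd : d = Metric.infDist x₁ H₂)
    (x₂ : X) (hx₂ : x₂ ∈ H₁ ∩ H₂)
    (hx₂proj : ∀ y ∈ H₁ ∩ H₂, ‖xbar - x₂‖ ≤ ‖xbar - y‖) :
    ‖xbar - x₁‖ ^ 2 + d ^ 2 ≤ ‖xbar - x₂‖ ^ 2 := by
  obtain ⟨a, b, ha, rfl⟩ := hH₁
  have hconv : Convex ℝ {x : X | ⟪a, x⟫ ≤ b} := by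
    intro x hx y hy s t hs ht hst
    simp only [Set.mem_setOf_eq, inner_add_right, inner_smul_right] at *
    have h1 := mul_le_mul_of_nonneg_left hx hs
    have h2 := mul_le_mul_of_nonneg_left hy ht
    have hb : s * b + t * b = b := by rw [← add_mul, hst, one_mul]
    linarith
  -- variational inequality for x₁
  haveI : Nonempty {x : X | ⟪a, x⟫ ≤ b} := ⟨⟨x₁, hx₁⟩⟩
  have hinf : ‖xbar - x₁‖ = ⨅ w : {x : X | ⟪a, x⟫ ≤ b}, ‖xbar - w‖ := by
    apply le_antisymm
    · exact le_ciInf fun w => hx₁proj w w.2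
    · exact ciInf_le ⟨0, fun r ⟨w, hw⟩ => hw ▸ norm_nonneg _⟩ (⟨x₁, hx₁⟩ : {x : X | ⟪a, x⟫ ≤ b})
  have hvar : ⟪xbar - x₁, x₂ - x₁⟫ ≤ 0 :=
    (norm_eq_iInf_iff_real_inner_le_zero hconv hx₁).mp hinf x₂ hx₂.1
  have hdle : d ≤ ‖x₁ - x₂‖ := by
    rw [hd, ← dist_eq_norm]
    exact Metric.infDist_le_dist_of_mem hx₂.2
  have hd0 : 0 ≤ d := hd ▸ Metric.infDist_nonneg
  have hexp : ‖xbar - x₂‖ ^ 2 =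
      ‖xbar - x₁‖ ^ 2 - 2 * ⟪xbar - x₁, x₂ - x₁⟫ + ‖x₂ - x₁‖ ^ 2 := by
    have h := norm_sub_sq_real (xbar - x₁) (x₂ - x₁)
    have : xbar - x₁ - (x₂ - x₁) = xbar - x₂ := by abel
    rw [this] at h
    linarith
  have hns : ‖x₁ - x₂‖ = ‖x₂ - x₁‖ := norm_sub_rev _ _
  nlinarith [norm_nonneg (x₂ - x₁)]
end

section
/- Let {a_k}_{k=1}^∞ be a sequence of nonnegative real numbers and θ > 0 a constant such that a_k ≥ a_{k+1} + θ·a_k² for all k ≥ 1. Then {a_k} converges to zero at an O(1/k) rate; that is, there exists a constant M > 0 such that a_k ≤ M/k for all k ≥ 1. -/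
/-- A nonnegative sequence satisfying `a_k ≥ a_{k+1} + θ a_k²` converges to
zero at an `O(1/k)` rate. -/
theorem nonneg_recurrence_one_over_k
    (a : ℕ → ℝ) (ha : ∀ k ≥ 1, 0 ≤ a k) (θ : ℝ) (hθ : 0 < θ)
    (hrec : ∀ k ≥ 1, a (k + 1) + θ * a k ^ 2 ≤ a k) :
    ∃ M > (0 : ℝ), ∀ k ≥ 1, a k ≤ M / (k : ℝ) := by
  have key : ∀ k : ℕ, 1 ≤ k → θ * ((k : ℝ) - 1) * a k ≤ 1 := by
    intro k hk
    induction k, hk using Nat.le_induction with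
    | base => simp
    | succ k hk ih =>
      rcases le_or_gt (a (k + 1)) 0 with h0 | h0
      · have hz : a (k + 1) = 0 := le_antisymm h0 (ha (k+1) (by omega))
        rw [hz]
        norm_num
      · have hak1 : 0 < a k := by
          have := hrec k hk
          nlinarith [sq_nonneg (a k)]
        have hle : a (k+1) ≤ a k := by
          have := hrec k hk
          nlinarith [sq_nonneg (a k)]
        have hstep : a (k+1) * (1 + θ * a k) ≤ a k := by
          have h := hrec k hk
          have hm := mul_le_mul_of_nonneg_right hle (mul_nonneg hθ.le hak1.le)
          nlinarith
        -- from IH : θ (k-1) a k ≤ 1, so θ (k-1) ≤ 1 / a k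
        -- want θ k * a (k+1) ≤ 1
        have h1 : θ * (k : ℝ) * a k ≤ 1 + θ * a k := by
          have := ih
          nlinarith
        have : θ * (k : ℝ) * a (k + 1) * (1 + θ * a k) ≤ (1 + θ * a k) := by
          calc θ * (k : ℝ) * a (k + 1) * (1 + θ * a k)
              = θ * (k : ℝ) * (a (k + 1) * (1 + θ * a k)) := by ring
            _ ≤ θ * (k : ℝ) * a k := by
                apply mul_le_mul_of_nonneg_left hstep
                positivity
            _ ≤ 1 + θ * a k := h1
        have hpos : 0 < 1 + θ * a k := by positivity
        have : θ * (k : ℝ) * a (k + 1) ≤ 1 := by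
          nlinarith
        push_cast
        linarith
  have ha1 : 0 ≤ a 1 := ha 1 le_rfl
  refine ⟨a 1 + 2 / θ, by positivity, ?_⟩
  intro k hk
  rcases eq_or_lt_of_le hk with h1 | h2
  · subst h1
    have := div_nonneg (by norm_num : (0:ℝ) ≤ 2) hθ.le
    simp
    linarith
  · -- k ≥ 2
    have hk2 : (2 : ℕ) ≤ k := h2
    have hkR : (2 : ℝ) ≤ (k : ℝ) := by exact_mod_cast hk2
    have hkey := key k hk
    have hka : 0 ≤ a k := ha k hk
    have hkpos : (0 : ℝ) < k := by linarith
    rw [le_div_iff₀ hkpos]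
    -- θ (k-1) a k ≤ 1, k - 1 ≥ k/2, so θ k a k ≤ 2
    have : θ * ((k:ℝ)/2) * a k ≤ 1 := by
      have h : (k:ℝ)/2 ≤ (k:ℝ) - 1 := by linarith
      nlinarith
    have hθk : θ * (k:ℝ) * a k ≤ 2 := by nlinarith
    have : a k * (k:ℝ) ≤ 2 / θ := by
      rw [le_div_iff₀ hθ]
      nlinarith
    nlinarith
end

section
/- Let {a_k}_{k=1}^∞ be a sequence of nonnegative real numbers with a₁ > 0 and θ > 0 a constant such that a_k ≥ a_{k+1} + θ·a_{k+1}⁴ for all k ≥ 1. Then for all k ≥ 1, a_k ≤ ( 1/a₁³ + (k−1)·3θ·(3θ·a₁³ + 1)^{−1} )^{−1/3}; in particular {a_k} converges to zero at an O(1/k^{1/3}) rate. -/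
/-!
Put `x_k = a_k³`. Cubing the recurrence and applying Bernoulli's inequality gives
`x_{k+1} (1 + 3θ x_{k+1}) ≤ x_k`, so `x` is nonincreasing and `x_k ≤ x₁`. This is the discrete
analogue of `x' = -3θ x²`: each step raises `1 / x_k` by at least
`3θ / (1 + 3θ x_{k+1}) ≥ c := 3θ / (3θ x₁ + 1)`, so `1 / x_k ≥ 1 / x₁ + (k - 1) c`. Taking cube
roots gives the explicit bound, and since `c ≤ 1 / x₁` the right-hand side is at least `k c`,
whence `a_k ≤ c^{-1/3} / k^{1/3}`.
-/

lemma pow_three_mul_one_add_le_pow_three {y θ : ℝ} (hy : 0 ≤ y) (hθ : 0 ≤ θ) :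
    y ^ 3 * (1 + 3 * θ * y ^ 3) ≤ (y + θ * y ^ 4) ^ 3 :=
  calc y ^ 3 * (1 + 3 * θ * y ^ 3) = y ^ 3 * (1 + 3 * (θ * y ^ 3)) := by ring
    _ ≤ y ^ 3 * (1 + θ * y ^ 3) ^ 3 := by
      gcongr
      exact one_add_mul_le_pow (by nlinarith [mul_nonneg hθ (pow_nonneg hy 3)]) 3
    _ = (y + θ * y ^ 4) ^ 3 := by ring

/-- The bound `x u ≤ 1` is the form of `1 / x ≥ u` that survives `x = 0`. -/
lemma mul_add_le_one_of_mul_one_add_le {x y u b A : ℝ} (hx : 0 ≤ x) (hxA : x ≤ A) (hb : 0 ≤ b)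
    (hu : 0 ≤ u) (hxy : x * (1 + b * x) ≤ y) (hyu : y * u ≤ 1) :
    x * (u + b * (b * A + 1)⁻¹) ≤ 1 := by
  have hA : 0 ≤ A := hx.trans hxA
  set c := b * (b * A + 1)⁻¹
  have hc : 0 ≤ c := by positivity
  have hcA : c * (b * A + 1) = b := by
    simp only [c, mul_assoc, inv_mul_cancel₀ (by positivity : b * A + 1 ≠ 0), mul_one]
  have hbx : 0 < 1 + b * x := by positivity
  refine le_of_mul_le_mul_right ?_ hbx
  calc x * (u + c) * (1 + b * x) = x * (1 + b * x) * u + x * (c * (1 + b * x)) := by ring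
    _ ≤ y * u + x * (c * (b * A + 1)) := by
      gcongr ?_ * _ + x * (c * ?_)
      linarith [mul_le_mul_of_nonneg_left hxA hb]
    _ ≤ 1 * (1 + b * x) := by rw [hcA]; linarith

lemma mul_le_one_of_mul_one_add_le {x : ℕ → ℝ} {b : ℝ} (hx : ∀ k ≥ 1, 0 ≤ x k) (hx1 : 0 < x 1)
    (hb : 0 ≤ b) (hrec : ∀ k ≥ 1, x (k + 1) * (1 + b * x (k + 1)) ≤ x k) :
    ∀ k ≥ 1, x k * (1 / x 1 + ((k : ℝ) - 1) * b * (b * x 1 + 1)⁻¹) ≤ 1 := by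
  have hle_first : ∀ k ≥ 1, x k ≤ x 1 := by
    intro k hk
    induction k, hk using Nat.le_induction with
    | base => rfl
    | succ k hk ih =>
      have hx' := hx (k + 1) (by omega)
      exact (le_mul_of_one_le_right hx' (by nlinarith)).trans ((hrec k hk).trans ih)
  intro k hk
  induction k, hk using Nat.le_induction with
  | base => simp [hx1.ne']
  | succ k hk ih =>
    have hk' : (1 : ℝ) ≤ k := by exact_mod_cast hk
    have hu : 0 ≤ 1 / x 1 + ((k : ℝ) - 1) * b * (b * x 1 + 1)⁻¹ := by
      have : 0 ≤ (k : ℝ) - 1 := by linarith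
      positivity
    convert mul_add_le_one_of_mul_one_add_le (hx (k + 1) (by omega)) (hle_first (k + 1) (by omega))
      hb hu (hrec k hk) ih using 2
    push_cast
    ring

lemma mul_le_one_div_add_sub_one_mul {A b : ℝ} (k : ℝ) (hA : 0 < A) (hb : 0 ≤ b) :
    k * (b * (b * A + 1)⁻¹) ≤ 1 / A + (k - 1) * b * (b * A + 1)⁻¹ := by
  have : b * (b * A + 1)⁻¹ ≤ 1 / A := by
    rw [← div_eq_mul_inv, div_le_div_iff₀ (by positivity) hA]
    linarith
  linarith

lemma le_rpow_neg_one_div_three_of_pow_three_mul_le_one {y v : ℝ} (hy : 0 ≤ y) (hv : 0 < v)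
    (h : y ^ 3 * v ≤ 1) : y ≤ v ^ (-(1 / 3) : ℝ) := by
  have hcube : (v ^ (-(1 / 3) : ℝ)) ^ 3 = v⁻¹ := by
    rw [← Real.rpow_natCast, ← Real.rpow_mul hv.le]
    norm_num [Real.rpow_neg_one]
  rwa [← pow_le_pow_iff_left₀ hy (by positivity) three_ne_zero, hcube, ← one_div, le_div_iff₀ hv]

/-- A nonnegative sequence with `a₁ > 0` satisfying
`a_k ≥ a_{k+1} + θ a_{k+1}⁴` satisfies the explicit bound
`a_k ≤ (1/a₁³ + (k-1)·3θ·(3θa₁³+1)⁻¹)^(-1/3)`, and hence converges to zero at an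
`O(1/k^{1/3})` rate. -/
theorem nonneg_recurrence_one_over_k_cuberoot
    (a : ℕ → ℝ) (ha : ∀ k ≥ 1, 0 ≤ a k) (ha1 : 0 < a 1) (θ : ℝ) (hθ : 0 < θ)
    (hrec : ∀ k ≥ 1, a (k + 1) + θ * a (k + 1) ^ 4 ≤ a k) :
    (∀ k ≥ 1, a k ≤
      (1 / a 1 ^ 3 + ((k : ℝ) - 1) * (3 * θ) * (3 * θ * a 1 ^ 3 + 1)⁻¹) ^ (-(1 / 3) : ℝ)) ∧
    ∃ M > (0 : ℝ), ∀ k ≥ 1, a k ≤ M / (k : ℝ) ^ ((1 : ℝ) / 3) := by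
  have hcube : ∀ k ≥ 1,
      a k ^ 3 * (1 / a 1 ^ 3 + ((k : ℝ) - 1) * (3 * θ) * (3 * θ * a 1 ^ 3 + 1)⁻¹) ≤ 1 :=
    mul_le_one_of_mul_one_add_le (x := fun k ↦ a k ^ 3) (fun k hk ↦ pow_nonneg (ha k hk) 3)
      (by positivity) (by positivity) fun k hk ↦
        (pow_three_mul_one_add_le_pow_three (ha (k + 1) (by omega)) hθ.le).trans
          (pow_le_pow_left₀ (by have := ha (k + 1) (by omega); positivity) (hrec k hk) 3)
  set c := 3 * θ * (3 * θ * a 1 ^ 3 + 1)⁻¹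
  have hc : 0 < c := by positivity
  have hkc (k : ℕ) := mul_le_one_div_add_sub_one_mul (k : ℝ) (by positivity : 0 < a 1 ^ 3)
    (by positivity : 0 ≤ 3 * θ)
  refine ⟨fun k hk ↦ ?_, c ^ (-(1 / 3) : ℝ), by positivity, fun k hk ↦ ?_⟩
  · have hk' : (0 : ℝ) < k := by exact_mod_cast hk
    exact le_rpow_neg_one_div_three_of_pow_three_mul_le_one (ha k hk)
      ((by positivity : 0 < (k : ℝ) * c).trans_le (hkc k)) (hcube k hk)
  · have hk' : (0 : ℝ) < k := by exact_mod_cast hk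
    calc a k ≤ (k * c) ^ (-(1 / 3) : ℝ) :=
          le_rpow_neg_one_div_three_of_pow_three_mul_le_one (ha k hk) (by positivity)
            ((mul_le_mul_of_nonneg_left (hkc k) (pow_nonneg (ha k hk) 3)).trans (hcube k hk))
      _ = c ^ (-(1 / 3) : ℝ) / k ^ ((1 : ℝ) / 3) := by
        rw [Real.mul_rpow hk'.le hc.le, Real.rpow_neg hk'.le, inv_mul_eq_div]
end

section
/- Let X be a finite-dimensional real inner product space, g : X → ℝ a convex function with min_{x∈X} g(x) < 0, C := {x : g(x) ≤ 0}, and x̄ ∈ X with x̄ ∉ C. Let d̄ := d(x̄, C). Suppose sequences {x_k}_{k≥0} ⊆ X, closed halfspaces {H_k}_{k≥0}, and {s_k}_{k≥0} ⊆ X satisfy, for all k ≥ 0: C ⊆ H_k; x_k is the metric projection of x̄ onto H_k; g(x_k) > 0; s_k ∈ ∂g(x_k); x_{k+1} is the metric projection of x̄ onto H_k ∩ C̃_k, where C̃_k := {x : g(x_k) + ⟨x − x_k, s_k⟩ ≤ 0}; and H_{k+1} := {x : ⟨x̄ − x_{k+1}, x − x_{k+1}⟩ ≤ 0}. Then, setting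 d_k := ‖x̄ − x_k‖, there exist constants γ̃ ≥ γ > 0 such that for all k ≥ 0, d_{k+1}² ≥ d_k² + (γ/γ̃)²·(d̄ − d_k)². -/
/-!
Write `d_k = ‖x̄ - x_k‖` and `Δ_k = x_{k+1} - x_k`. Since `x_k` is the projection of `x̄` onto
the halfspace `H_k ∋ x_{k+1}`, the obtuse-angle property gives `d_{k+1}² ≥ d_k² + ‖Δ_k‖²`, so it
suffices to bound `‖Δ_k‖` below by a multiple of `d̄ - d_k`. The cut `g(x_k) + ⟪Δ_k, s_k⟫ ≤ 0`
gives `g(x_k) ≤ ‖s_k‖ ‖Δ_k‖`; the subgradients `s_k` are bounded by some `γ̃`, because all `x_k`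
lie in the ball of radius `d̄` about `x̄` and the continuous `g` is bounded near that ball; and
the Slater point `x₀` yields the error bound `γ · d(x_k, C) ≤ g(x_k)⁺`, while
`d̄ - d_k ≤ d(x_k, C)`.
-/

open RealInnerProductSpace Metric Set

theorem norm_sub_le_infDist_of_subset {E : Type*} [SeminormedAddCommGroup E] {K C : Set E}
    {u v : E} (hC : C.Nonempty) (hCK : C ⊆ K) (hv : ∀ y ∈ K, ‖u - v‖ ≤ ‖u - y‖) :
    ‖u - v‖ ≤ infDist u C :=
  (le_infDist hC).2 fun y hy => by rw [dist_eq_norm]; exact hv y (hCK hy)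

section Inner

variable {E : Type*} [NormedAddCommGroup E] [InnerProductSpace ℝ E]

theorem convex_setOf_inner_le (a : E) (b : ℝ) : Convex ℝ {y : E | ⟪a, y⟫ ≤ b} :=
  convex_halfSpace_le (innerₛₗ ℝ a).isLinear b

theorem sq_norm_sub_add_sq_norm_sub_le_of_isNearest {K : Set E} (hK : Convex ℝ K) {u v w : E}
    (hvK : v ∈ K) (hv : ∀ y ∈ K, ‖u - v‖ ≤ ‖u - y‖) (hw : w ∈ K) :
    ‖u - v‖ ^ 2 + ‖w - v‖ ^ 2 ≤ ‖u - w‖ ^ 2 := by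
  have : Nonempty K := ⟨⟨v, hvK⟩⟩
  have hinf : ‖u - v‖ = ⨅ y : K, ‖u - y‖ :=
    le_antisymm (le_ciInf fun y => hv y y.2)
      (ciInf_le (f := fun y : K => ‖u - y‖) ⟨0, forall_mem_range.2 fun _ => norm_nonneg _⟩
        ⟨v, hvK⟩)
  have hobtuse : ⟪u - v, w - v⟫ ≤ 0 :=
    (norm_eq_iInf_iff_real_inner_le_zero hK hvK).1 hinf w hw
  have hexpand := norm_sub_sq_real (u - v) (w - v)
  rw [sub_sub_sub_cancel_right] at hexpand
  linarith

theorem max_le_norm_mul_norm_of_add_inner_le_zero {a : ℝ} {s w : E} (h : a + ⟪w, s⟫ ≤ 0) :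
    max a 0 ≤ ‖s‖ * ‖w‖ := by
  refine max_le ?_ (by positivity)
  linarith [(neg_le_abs _).trans (abs_real_inner_le_norm s w), real_inner_comm s w]

theorem mul_norm_le_of_subgradient {g : E → ℝ} {y s : E}
    (hs : ∀ z, g y + ⟪s, z - y⟫ ≤ g z) {r M : ℝ} (hr : 0 < r)
    (hM : ∀ z ∈ closedBall y r, g z ≤ M) : r * ‖s‖ ≤ M - g y := by
  rcases eq_or_ne s 0 with rfl | hs0
  · simpa using hM y (mem_closedBall_self hr.le)
  have hsn : 0 < ‖s‖ := norm_pos_iff.2 hs0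
  set z := y + (r / ‖s‖) • s
  have hz : z ∈ closedBall y r := by
    rw [mem_closedBall, dist_eq_norm, add_sub_cancel_left, norm_smul, Real.norm_of_nonneg
      (div_pos hr hsn).le, div_mul_cancel₀ _ hsn.ne']
  have hinner : ⟪s, z - y⟫ = r * ‖s‖ := by
    rw [add_sub_cancel_left, real_inner_smul_right, real_inner_self_eq_norm_sq]
    field_simp
  linarith [hs z, hM z hz]

end Inner

section ConvexFunction

variable {E : Type*} [NormedAddCommGroup E] [NormedSpace ℝ E]

/-- By convexity, the point of the segment `[y, x₀]` at which the linear interpolation of `g`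
vanishes lies in `{g ≤ 0}`. -/
theorem ConvexOn.infDist_setOf_le_zero_mul_le {g : E → ℝ}
    (hg : ConvexOn ℝ univ g) {x₀ : E} (hx₀ : g x₀ < 0) (y : E) :
    infDist y {z | g z ≤ 0} * -g x₀ ≤ max (g y) 0 * ‖y - x₀‖ := by
  rcases le_or_gt (g y) 0 with hy | hy
  · rw [infDist_zero_of_mem (show y ∈ {z | g z ≤ 0} from hy), zero_mul]
    positivity
  set t := g y / (g y - g x₀)
  have hden : 0 < g y - g x₀ := by linarith
  have ht : t * (g y - g x₀) = g y := div_mul_cancel₀ _ hden.ne'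
  have ht0 : 0 ≤ t := (div_pos hy hden).le
  have ht1 : t ≤ 1 := (div_le_one hden).2 (by linarith)
  have hmem : t • x₀ + (1 - t) • y ∈ {z | g z ≤ 0} := by
    have := hg.2 (mem_univ x₀) (mem_univ y) ht0 (sub_nonneg.2 ht1) (by ring)
    simp only [smul_eq_mul] at this
    change g _ ≤ 0
    nlinarith
  have hdist : dist y (t • x₀ + (1 - t) • y) = t * ‖y - x₀‖ := by
    rw [dist_eq_norm, show y - (t • x₀ + (1 - t) • y) = t • (y - x₀) by module, norm_smul,
      Real.norm_of_nonneg ht0]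
  calc infDist y {z | g z ≤ 0} * -g x₀ ≤ t * ‖y - x₀‖ * -g x₀ := by
        gcongr
        · linarith
        · exact hdist ▸ infDist_le_dist_of_mem hmem
    _ ≤ t * (g y - g x₀) * ‖y - x₀‖ := by
        nlinarith [mul_nonneg (mul_nonneg ht0 (norm_nonneg (y - x₀))) hy.le]
    _ = max (g y) 0 * ‖y - x₀‖ := by rw [ht, max_eq_left hy.le]

theorem ConvexOn.div_mul_infDist_setOf_le_zero_le {g : E → ℝ}
    (hg : ConvexOn ℝ univ g) {x₀ : E} (hx₀ : g x₀ < 0) {y : E} {R : ℝ} (hR : 0 < R)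
    (hy : ‖y - x₀‖ ≤ R) : -g x₀ / R * infDist y {z | g z ≤ 0} ≤ max (g y) 0 := by
  rw [div_mul_eq_mul_div, div_le_iff₀ hR, mul_comm]
  calc infDist y {z | g z ≤ 0} * -g x₀ ≤ max (g y) 0 * ‖y - x₀‖ :=
        hg.infDist_setOf_le_zero_mul_le hx₀ y
    _ ≤ max (g y) 0 * R := by gcongr

end ConvexFunction

theorem sq_add_sq_div_mul_sq_le {d d' Δ dbar γ γt : ℝ} (hpyth : d ^ 2 + Δ ^ 2 ≤ d' ^ 2)
    (hd : d ≤ dbar) (hγ : 0 < γ) (hγt : 0 < γt) (hgap : γ * (dbar - d) ≤ γt * Δ) :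
    d ^ 2 + (γ / γt) ^ 2 * (dbar - d) ^ 2 ≤ d' ^ 2 := by
  have hΔ : γ / γt * (dbar - d) ≤ Δ := by
    rw [div_mul_eq_mul_div, div_le_iff₀ hγt]
    linarith
  have hsq : (γ / γt * (dbar - d)) ^ 2 ≤ Δ ^ 2 :=
    pow_le_pow_left₀ (by have := sub_nonneg.2 hd; positivity) hΔ 2
  linarith [mul_pow (γ / γt) (dbar - d) 2]

theorem dykstra_level_set_distance_recurrence_general
    {X : Type*} [NormedAddCommGroup X] [InnerProductSpace ℝ X] [FiniteDimensional ℝ X]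
    (g : X → ℝ) (hg : ConvexOn ℝ Set.univ g)
    (hmin : ∃ x₀ : X, g x₀ < 0 ∧ ∀ x, g x₀ ≤ g x)
    (C : Set X) (hC : C = {x : X | g x ≤ 0})
    (xbar : X) (hxbarC : xbar ∉ C)
    (dbar : ℝ) (hdbar : dbar = Metric.infDist xbar C)
    (x : ℕ → X) (H : ℕ → Set X) (s : ℕ → X)
    (hHhalf : ∀ k : ℕ, ∃ (a : X) (b : ℝ), a ≠ 0 ∧ H k = {y : X | ⟪a, y⟫ ≤ b})
    (hCH : ∀ k : ℕ, C ⊆ H k)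
    (hxk : ∀ k : ℕ, x k ∈ H k)
    (hxkproj : ∀ k : ℕ, ∀ y ∈ H k, ‖xbar - x k‖ ≤ ‖xbar - y‖)
    (hs : ∀ k : ℕ, ∀ y : X, g (x k) + ⟪s k, y - x k⟫ ≤ g y)
    (hxk1 : ∀ k : ℕ,
      x (k + 1) ∈ H k ∩ {y : X | g (x k) + ⟪y - x k, s k⟫ ≤ 0}) :
    ∃ (γt γ : ℝ), 0 < γ ∧ γ ≤ γt ∧ ∀ k : ℕ,
      ‖xbar - x k‖ ^ 2 + (γ / γt) ^ 2 * (dbar - ‖xbar - x k‖) ^ 2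
        ≤ ‖xbar - x (k + 1)‖ ^ 2 := by
  obtain ⟨x₀, hx₀, hx₀min⟩ := hmin
  subst hC
  have hR : 0 < dbar + ‖xbar - x₀‖ := add_pos_of_nonneg_of_pos (hdbar ▸ infDist_nonneg)
    (norm_pos_iff.2 (sub_ne_zero.2 fun h => hxbarC (h ▸ hx₀.le)))
  obtain ⟨M, hM⟩ := (isCompact_closedBall xbar (dbar + 1)).bddAbove_image
    ((hg.continuousOn isOpen_univ).mono (subset_univ _))
  set γ := -g x₀ / (dbar + ‖xbar - x₀‖)
  have hγ : 0 < γ := div_pos (neg_pos.2 hx₀) hR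
  refine ⟨max (M - g x₀) γ, γ, hγ, le_max_right _ _, fun k => ?_⟩
  have hd : ‖xbar - x k‖ ≤ dbar :=
    hdbar ▸ norm_sub_le_infDist_of_subset ⟨x₀, hx₀.le⟩ (hCH k) (hxkproj k)
  have hHconv : Convex ℝ (H k) := by
    obtain ⟨a, b, -, hab⟩ := hHhalf k
    exact hab ▸ convex_setOf_inner_le a b
  refine sq_add_sq_div_mul_sq_le (sq_norm_sub_add_sq_norm_sub_le_of_isNearest hHconv (hxk k)
    (hxkproj k) (hxk1 k).1) hd hγ (hγ.trans_le (le_max_right _ _)) ?_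
  calc γ * (dbar - ‖xbar - x k‖) ≤ γ * infDist (x k) {x | g x ≤ 0} := by
        gcongr
        have := hdbar ▸ infDist_le_infDist_add_dist (s := {x | g x ≤ 0}) (x := xbar) (y := x k)
        rw [dist_eq_norm] at this
        linarith
    _ ≤ max (g (x k)) 0 := by
        refine hg.div_mul_infDist_setOf_le_zero_le hx₀ hR ?_
        calc ‖x k - x₀‖ ≤ ‖x k - xbar‖ + ‖xbar - x₀‖ := norm_sub_le_norm_sub_add_norm_sub _ _ _
          _ ≤ dbar + ‖xbar - x₀‖ := by rw [norm_sub_rev]; linarith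
    _ ≤ ‖s k‖ * ‖x (k + 1) - x k‖ := max_le_norm_mul_norm_of_add_inner_le_zero (hxk1 k).2
    _ ≤ max (M - g x₀) γ * ‖x (k + 1) - x k‖ := by
        gcongr
        have hball : closedBall (x k) 1 ⊆ closedBall xbar (dbar + 1) :=
          closedBall_subset_closedBall' (by rw [dist_eq_norm, norm_sub_rev]; linarith)
        have := mul_norm_le_of_subgradient (hs k) one_pos fun z hz => hM ⟨z, hball hz, rfl⟩
        linarith [hx₀min (x k), le_max_left (M - g x₀) γ]

/-- For the Dykstra-type iteration with subgradient outer approximations,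
there are constants `γ̃ ≥ γ > 0` such that `d_{k+1}² ≥ d_k² + (γ/γ̃)²(d̄ - d_k)²`. -/
theorem dykstra_level_set_distance_recurrence
    {X : Type*} [NormedAddCommGroup X] [InnerProductSpace ℝ X] [FiniteDimensional ℝ X]
    (g : X → ℝ) (hg : ConvexOn ℝ Set.univ g)
    (hmin : ∃ x₀ : X, g x₀ < 0 ∧ ∀ x, g x₀ ≤ g x)
    (C : Set X) (hC : C = {x : X | g x ≤ 0})
    (xbar : X) (hxbarC : xbar ∉ C)
    (dbar : ℝ) (hdbar : dbar = Metric.infDist xbar C)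
    (x : ℕ → X) (H : ℕ → Set X) (s : ℕ → X)
    (hHhalf : ∀ k : ℕ, ∃ (a : X) (b : ℝ), a ≠ 0 ∧ H k = {y : X | ⟪a, y⟫ ≤ b})
    (hCH : ∀ k : ℕ, C ⊆ H k)
    (hxk : ∀ k : ℕ, x k ∈ H k)
    (hxkproj : ∀ k : ℕ, ∀ y ∈ H k, ‖xbar - x k‖ ≤ ‖xbar - y‖)
    (hgpos : ∀ k : ℕ, 0 < g (x k))
    (hs : ∀ k : ℕ, ∀ y : X, g (x k) + ⟪s k, y - x k⟫ ≤ g y)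
    (hxk1 : ∀ k : ℕ,
      x (k + 1) ∈ H k ∩ {y : X | g (x k) + ⟪y - x k, s k⟫ ≤ 0})
    (hxk1proj : ∀ k : ℕ, ∀ y ∈ H k ∩ {y : X | g (x k) + ⟪y - x k, s k⟫ ≤ 0},
      ‖xbar - x (k + 1)‖ ≤ ‖xbar - y‖)
    (hHk1 : ∀ k : ℕ,
      H (k + 1) = {y : X | ⟪xbar - x (k + 1), y - x (k + 1)⟫ ≤ 0}) :
    ∃ (γt γ : ℝ), 0 < γ ∧ γ ≤ γt ∧ ∀ k : ℕ,
      ‖xbar - x k‖ ^ 2 + (γ / γt) ^ 2 * (dbar - ‖xbar - x k‖) ^ 2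
        ≤ ‖xbar - x (k + 1)‖ ^ 2 :=
  dykstra_level_set_distance_recurrence_general g hg hmin C hC xbar hxbarC dbar hdbar x H s hHhalf
    hCH hxk hxkproj hs hxk1
end

section
/- Let X be a finite-dimensional real inner product space, Ē a finite index set, and {H_α}_{α∈Ē} a family of linear subspaces of X. Let D := ⋂_{α∈Ē} H_α. Then there exists a constant c_reg > 0 such that: for every subset E′ ⊆ Ē with ⋂_{α∈E′} H_α = D and every v ∈ D^⊥, there exist vectors {v_α}_{α∈E′} with v_α ∈ H_α^⊥ for each α ∈ E′, ∑_{α∈E′} v_α = v, and ‖v_α‖ ≤ c_reg·‖v‖ for all α ∈ E′. -/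
open Submodule in
lemma exists_regular_decomposition_constant.aux
    {X : Type*} [NormedAddCommGroup X] [InnerProductSpace ℝ X] [FiniteDimensional ℝ X]
    {ι : Type*} [Fintype ι] (H : ι → Submodule ℝ X)
    (D : Submodule ℝ X) (E' : Finset ι) (hE' : (⨅ α ∈ E', H α) = D) :
    ∃ C : ℝ, 0 < C ∧ ∀ v ∈ Dᗮ, ∃ w : ι → X,
      (∀ α ∈ E', w α ∈ (H α)ᗮ) ∧ (∑ α ∈ E', w α) = v ∧
      ∀ α ∈ E', ‖w α‖ ≤ C * ‖v‖ := by
  classical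
  set K : ι → Submodule ℝ X := fun α => if α ∈ E' then (H α)ᗮ else ⊥ with hK
  set M : Submodule ℝ (ι → X) := Submodule.pi Set.univ K with hM
  let T : M →ₗ[ℝ] X :=
    { toFun := fun w => ∑ α : ι, (w : ι → X) α
      map_add' := by intro a b; simp [Finset.sum_add_distrib]
      map_smul' := by intro c a; simp [Finset.smul_sum] }
  -- Dᗮ equals the sup of orthogonals
  have hsup : Dᗮ = ⨆ α ∈ E', (H α)ᗮ := by
    have h1 : (⨆ α ∈ E', (H α)ᗮ)ᗮ = D := by
      rw [← hE']
      rw [iSup_subtype', ← Submodule.iInf_orthogonal, iInf_subtype']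
      simp [Submodule.orthogonal_orthogonal]
    rw [← h1, Submodule.orthogonal_orthogonal]
  have hrange : LinearMap.range T = Dᗮ := by
    apply le_antisymm
    · rintro x ⟨w, rfl⟩
      have : ∀ α : ι, (w : ι → X) α ∈ Dᗮ := by
        intro α
        have hwα : (w : ι → X) α ∈ K α := w.2 α (Set.mem_univ α)
        by_cases hα : α ∈ E'
        · rw [hK] at hwα; simp only [if_pos hα] at hwα
          rw [hsup]
          exact Submodule.mem_iSup_of_mem α (Submodule.mem_iSup_of_mem hα hwα)
        · rw [hK] at hwα; simp only [if_neg hα] at hwα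
          rw [(Submodule.mem_bot ℝ).mp hwα]
          exact Submodule.zero_mem _
      exact Submodule.sum_mem _ fun α _ => this α
    · rw [hsup]
      refine iSup₂_le fun α hα x hx => ?_
      refine ⟨⟨Pi.single α x, ?_⟩, ?_⟩
      · intro β _
        rw [hK]
        by_cases hβ : β = α
        · subst hβ; simp [if_pos hα, hx]
        · simp [Pi.single_eq_of_ne hβ]
      · simp [T, Finset.sum_pi_single]
  have hTsurj : ∀ y : Dᗮ, ∃ w : M, T w = (y : X) := by
    intro y
    have : (y : X) ∈ LinearMap.range T := by rw [hrange]; exact y.2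
    exact this
  let T' : M →ₗ[ℝ] Dᗮ := T.codRestrict Dᗮ (fun w => by
    rw [← hrange]; exact LinearMap.mem_range_self T w)
  have hT'surj : LinearMap.range T' = ⊤ := by
    rw [eq_top_iff]
    rintro y -
    obtain ⟨w, hw⟩ := hTsurj y
    exact ⟨w, Subtype.ext hw⟩
  obtain ⟨S, hS⟩ := T'.exists_rightInverse_of_surjective hT'surj
  let S' : Dᗮ →L[ℝ] M := LinearMap.toContinuousLinearMap S
  refine ⟨‖S'‖ + 1, by positivity, fun v hv => ?_⟩
  set w : M := S ⟨v, hv⟩ with hw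
  have hTw : T' w = ⟨v, hv⟩ := by
    have := congrArg (fun f => f ⟨v, hv⟩) hS
    simpa using this
  have hmem : ∀ α : ι, (w : ι → X) α ∈ K α := fun α => w.2 α (Set.mem_univ α)
  refine ⟨(w : ι → X), ?_, ?_, ?_⟩
  · intro α hα
    have := hmem α
    simp only [K, if_pos hα] at this
    exact this
  · have hzero : ∀ α ∉ E', (w : ι → X) α = 0 := by
      intro α hα
      have := hmem α
      simp only [K, if_neg hα] at this
      exact (Submodule.mem_bot ℝ).mp this
    have : ∑ α ∈ E', (w : ι → X) α = ∑ α : ι, (w : ι → X) α :=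
      Finset.sum_subset (Finset.subset_univ E') (fun α _ hα => hzero α hα)
    rw [this]
    have : T w = v := congrArg Subtype.val hTw
    exact this
  · intro α _
    have h1 : ‖(w : ι → X) α‖ ≤ ‖(w : ι → X)‖ := norm_le_pi_norm _ α
    have h2 : ‖(w : ι → X)‖ = ‖w‖ := rfl
    have h3 : ‖w‖ ≤ ‖S'‖ * ‖(⟨v, hv⟩ : Dᗮ)‖ := S'.le_opNorm _
    have h4 : ‖(⟨v, hv⟩ : Dᗮ)‖ = ‖v‖ := rfl
    calc ‖(w : ι → X) α‖ ≤ ‖S'‖ * ‖v‖ := by rw [h2] at h1; rw [h4] at h3; linarith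
      _ ≤ (‖S'‖ + 1) * ‖v‖ := by nlinarith [norm_nonneg v]

/-- For a finite family of linear subspaces `H_α` with intersection `D`,
there is a constant `c_reg > 0` so that every `v ∈ D^⊥` can be written, for any subset
`E'` whose subspaces still intersect to `D`, as `v = ∑_{α ∈ E'} v_α` with
`v_α ∈ H_α^⊥` and `‖v_α‖ ≤ c_reg ‖v‖`. -/
theorem exists_regular_decomposition_constant
    {X : Type*} [NormedAddCommGroup X] [InnerProductSpace ℝ X] [FiniteDimensional ℝ X]
    {ι : Type*} [Fintype ι] (H : ι → Submodule ℝ X)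
    (D : Submodule ℝ X) (hD : D = ⨅ α : ι, H α) :
    ∃ creg > (0 : ℝ), ∀ E' : Finset ι, (⨅ α ∈ E', H α) = D →
      ∀ v ∈ Dᗮ, ∃ w : ι → X,
        (∀ α ∈ E', w α ∈ (H α)ᗮ) ∧
        (∑ α ∈ E', w α) = v ∧
        (∀ α ∈ E', ‖w α‖ ≤ creg * ‖v‖) := by
  classical
  let c : Finset ι → ℝ := fun E' =>
    if h : (⨅ α ∈ E', H α) = D then
      (exists_regular_decomposition_constant.aux H D E' h).choose
    else 0
  refine ⟨1 + ∑ E' : Finset ι, max (c E') 0, by positivity, fun E' hE' v hv => ?_⟩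
  have hc : c E' = (exists_regular_decomposition_constant.aux H D E' hE').choose := by
    simp [c, dif_pos hE']
  obtain ⟨hpos, hspec⟩ := (exists_regular_decomposition_constant.aux H D E' hE').choose_spec
  obtain ⟨w, h1, h2, h3⟩ := hspec v hv
  refine ⟨w, h1, h2, fun α hα => ?_⟩
  have hle : c E' ≤ 1 + ∑ E'' : Finset ι, max (c E'') 0 := by
    have h5 : c E' ≤ max (c E') 0 := le_max_left _ _
    have h6 : max (c E') 0 ≤ ∑ E'' : Finset ι, max (c E'') 0 :=
      Finset.single_le_sum (f := fun E'' => max (c E'') 0)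
        (fun i _ => le_max_right _ _) (Finset.mem_univ E')
    linarith
  calc ‖w α‖ ≤ c E' * ‖v‖ := by rw [hc]; exact h3 α hα
    _ ≤ (1 + ∑ E'' : Finset ι, max (c E'') 0) * ‖v‖ :=
      mul_le_mul_of_nonneg_right hle (norm_nonneg v)
end

section
/- Let X be a real inner product space and let x̄, x̂, x ∈ X with x̄ ≠ x̂. Let Ĥ be the halfspace Ĥ := {x̃ ∈ X : ⟨x̄ − x̂, x̃ − x̂⟩ ≤ 0}, and suppose that x̂ lies in the halfspace H := {x̃ ∈ X : ⟨x̄ − x, x̃ − x⟩ ≤ 0}, i.e., ⟨x̄ − x, x̂ − x⟩ ≤ 0. Then ‖x − x̂‖ ≤ ‖x̄ − x̂‖ and d(x, Ĥ) ≥ ‖x − x̂‖² / ‖x̄ − x̂‖. -/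
open RealInnerProductSpace

/-- Plane-geometry estimate: if `x̂` lies in the halfspace
`{x̃ : ⟪x̄ - x, x̃ - x⟫ ≤ 0}` and `x̄ ≠ x̂`, then `‖x - x̂‖ ≤ ‖x̄ - x̂‖` and the distance
from `x` to `Ĥ = {x̃ : ⟪x̄ - x̂, x̃ - x̂⟫ ≤ 0}` is at least `‖x - x̂‖²/‖x̄ - x̂‖`. -/
theorem plane_geometry_halfspace_distance
    {X : Type*} [NormedAddCommGroup X] [InnerProductSpace ℝ X]
    (xbar xhat x : X) (hne : xbar ≠ xhat)
    (hx : ⟪xbar - x, xhat - x⟫ ≤ 0) :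
    ‖x - xhat‖ ≤ ‖xbar - xhat‖ ∧
    ‖x - xhat‖ ^ 2 / ‖xbar - xhat‖ ≤
      Metric.infDist x {xt : X | ⟪xbar - xhat, xt - xhat⟫ ≤ 0} := by
  have hapos : (0:ℝ) < ‖xbar - xhat‖ := by
    rw [norm_pos_iff, sub_ne_zero]; exact hne
  -- key expansion: ⟪x̄ - x̂, x - x̂⟫ ≥ ‖x - x̂‖²
  have hkey : ‖x - xhat‖ ^ 2 ≤ ⟪xbar - xhat, x - xhat⟫ := by
    have h1 : ⟪xbar - xhat, x - xhat⟫
        = ⟪xbar - x, x - xhat⟫ + ⟪x - xhat, x - xhat⟫ := by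
      rw [← inner_add_left]; congr 1; abel
    have h2 : ⟪xbar - x, x - xhat⟫ = -⟪xbar - x, xhat - x⟫ := by
      rw [← inner_neg_right]; congr 1; abel
    have h3 : ⟪x - xhat, x - xhat⟫ = ‖x - xhat‖ ^ 2 := by
      rw [real_inner_self_eq_norm_sq]
    nlinarith
  constructor
  · -- ‖x - x̂‖² ≤ ⟪x̄ - x̂, x - x̂⟫ ≤ ‖x̄ - x̂‖ ‖x - x̂‖
    have := real_inner_le_norm (xbar - xhat) (x - xhat)
    nlinarith [norm_nonneg (x - xhat), norm_nonneg (xbar - xhat)]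
  · have hne' : ({xt : X | ⟪xbar - xhat, xt - xhat⟫ ≤ 0}).Nonempty := by
      exact ⟨xhat, by simp⟩
    by_contra h
    push_neg at h
    rw [Metric.infDist_lt_iff hne'] at h
    obtain ⟨y, hy, hlt⟩ := h
    have hy' : ⟪xbar - xhat, y - xhat⟫ ≤ 0 := hy
    have hsplit : ⟪xbar - xhat, x - y⟫
        = ⟪xbar - xhat, x - xhat⟫ - ⟪xbar - xhat, y - xhat⟫ := by
      rw [← inner_sub_right]; congr 1; abel
    have hcs : ⟪xbar - xhat, x - y⟫ ≤ ‖xbar - xhat‖ * ‖x - y‖ :=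
      real_inner_le_norm _ _
    have h4 : ‖x - xhat‖ ^ 2 ≤ ‖xbar - xhat‖ * ‖x - y‖ := by nlinarith
    rw [lt_div_iff₀ hapos, dist_eq_norm] at hlt
    nlinarith
end

section
/- Let A and B be disjoint finite sets with N := |A| + |B| ≥ 1, let c₄ > 0 and c₅ > 0, and let a : A → ℝ and b : B → ℝ take nonnegative values. Then c₄·∑_{i∈A} a_i² + c₅·∑_{i∈B} b_i⁴ ≥ (1/N³)·( c₄^{1/4}·∑_{i∈A} √(a_i) + c₅^{1/4}·∑_{i∈B} b_i )⁴. -/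
/-- Power-means/Hölder inequality:
`c₄ ∑_{i∈A} a_i² + c₅ ∑_{i∈B} b_i⁴ ≥ (1/N³)(c₄^{1/4} ∑_{i∈A} √a_i + c₅^{1/4} ∑_{i∈B} b_i)⁴`
with `N = |A| + |B| ≥ 1`, for disjoint finite sets `A, B` and nonnegative data. -/
theorem power_means_mixed_inequality
    {ι : Type*} (A B : Finset ι) (hAB : Disjoint A B)
    (hN : 1 ≤ A.card + B.card)
    (c₄ c₅ : ℝ) (hc₄ : 0 < c₄) (hc₅ : 0 < c₅)
    (a b : ι → ℝ) (ha : ∀ i ∈ A, 0 ≤ a i) (hb : ∀ i ∈ B, 0 ≤ b i) :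
    (1 / ((A.card + B.card : ℝ)) ^ 3) *
        (c₄ ^ ((1 : ℝ) / 4) * ∑ i ∈ A, Real.sqrt (a i)
          + c₅ ^ ((1 : ℝ) / 4) * ∑ i ∈ B, b i) ^ 4
      ≤ c₄ * ∑ i ∈ A, a i ^ 2 + c₅ * ∑ i ∈ B, b i ^ 4 := by
  classical
  set f : ι → ℝ := fun i => if i ∈ A then c₄ ^ ((1:ℝ)/4) * Real.sqrt (a i)
    else c₅ ^ ((1:ℝ)/4) * b i with hf
  set s := A ∪ B with hs
  have hcard : (s.card : ℝ) = (A.card + B.card : ℝ) := by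
    rw [Finset.card_union_of_disjoint hAB]; push_cast; ring
  have hsumf : ∑ i ∈ s, f i
      = c₄ ^ ((1:ℝ)/4) * ∑ i ∈ A, Real.sqrt (a i)
        + c₅ ^ ((1:ℝ)/4) * ∑ i ∈ B, b i := by
    rw [hs, Finset.sum_union hAB, Finset.mul_sum, Finset.mul_sum]
    congr 1
    · exact Finset.sum_congr rfl fun i hi => by simp [hf, hi]
    · refine Finset.sum_congr rfl fun i hi => ?_
      have : i ∉ A := fun h => (Finset.disjoint_left.mp hAB h) hi
      simp [hf, this]
  have hsumf4 : ∑ i ∈ s, f i ^ 4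
      = c₄ * ∑ i ∈ A, a i ^ 2 + c₅ * ∑ i ∈ B, b i ^ 4 := by
    rw [hs, Finset.sum_union hAB, Finset.mul_sum, Finset.mul_sum]
    congr 1
    · refine Finset.sum_congr rfl fun i hi => ?_
      have h4 : (c₄ ^ ((1:ℝ)/4)) ^ (4:ℕ) = c₄ := by
        rw [← Real.rpow_natCast (c₄ ^ ((1:ℝ)/4)) 4, ← Real.rpow_mul hc₄.le]
        norm_num
      have hsq : Real.sqrt (a i) ^ (4:ℕ) = a i ^ 2 := by
        have : Real.sqrt (a i) ^ (4:ℕ) = (Real.sqrt (a i) ^ 2) ^ 2 := by ring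
        rw [this, Real.sq_sqrt (ha i hi)]
      simp only [hf, hi, if_pos, mul_pow, h4, hsq]
    · refine Finset.sum_congr rfl fun i hi => ?_
      have hiA : i ∉ A := fun h => (Finset.disjoint_left.mp hAB h) hi
      have h4 : (c₅ ^ ((1:ℝ)/4)) ^ (4:ℕ) = c₅ := by
        rw [← Real.rpow_natCast (c₅ ^ ((1:ℝ)/4)) 4, ← Real.rpow_mul hc₅.le]
        norm_num
      simp only [hf, hiA, if_neg, mul_pow, h4, not_false_iff]
  have hNpos : (0:ℝ) < (A.card + B.card : ℝ) := by
    have : (1:ℝ) ≤ (A.card + B.card : ℝ) := by exact_mod_cast hN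
    linarith
  -- key: (∑ f)^4 ≤ N^3 * ∑ f^4
  have h1 : (∑ i ∈ s, f i) ^ 2 ≤ (s.card : ℝ) * ∑ i ∈ s, f i ^ 2 :=
    sq_sum_le_card_mul_sum_sq
  have h2 : (∑ i ∈ s, f i ^ 2) ^ 2 ≤ (s.card : ℝ) * ∑ i ∈ s, (f i ^ 2) ^ 2 :=
    sq_sum_le_card_mul_sum_sq
  have hcardnn : (0:ℝ) ≤ (s.card : ℝ) := Nat.cast_nonneg _
  have hsum2nn : (0:ℝ) ≤ ∑ i ∈ s, f i ^ 2 :=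
    Finset.sum_nonneg fun i _ => sq_nonneg _
  have key : (∑ i ∈ s, f i) ^ 4 ≤ (s.card : ℝ) ^ 3 * ∑ i ∈ s, f i ^ 4 := by
    have h1' : ((∑ i ∈ s, f i) ^ 2) ^ 2 ≤ ((s.card : ℝ) * ∑ i ∈ s, f i ^ 2) ^ 2 :=
      pow_le_pow_left₀ (sq_nonneg _) h1 2
    have h2' : ((s.card : ℝ) * ∑ i ∈ s, f i ^ 2) ^ 2
        ≤ (s.card : ℝ) ^ 2 * ((s.card : ℝ) * ∑ i ∈ s, (f i ^ 2) ^ 2) := by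
      rw [mul_pow]
      exact mul_le_mul_of_nonneg_left h2 (by positivity)
    calc (∑ i ∈ s, f i) ^ 4 = ((∑ i ∈ s, f i) ^ 2) ^ 2 := by ring
    _ ≤ (s.card : ℝ) ^ 2 * ((s.card : ℝ) * ∑ i ∈ s, (f i ^ 2) ^ 2) := h1'.trans h2'
    _ = (s.card : ℝ) ^ 3 * ∑ i ∈ s, f i ^ 4 := by
        have h : ∑ i ∈ s, (f i ^ 2) ^ 2 = ∑ i ∈ s, f i ^ 4 :=
          Finset.sum_congr rfl fun i _ => by ring
        rw [h]; ring
  rw [← hsumf, ← hsumf4, ← hcard, div_mul_eq_mul_div, one_mul,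
    div_le_iff₀ (by rw [hcard]; positivity)]
  linarith [key]
end

section
/- Let {h_n}_{n=1}^∞ be a nonincreasing sequence of nonnegative real numbers and θ > 0 a constant such that h_{n+2} ≤ h_n − θ·(h_{n+2})⁴ for all n ≥ 1. Then {h_n} converges to zero at an O(1/n^{1/3}) rate; that is, there exists a constant M > 0 such that h_n ≤ M/n^{1/3} for all n ≥ 1. -/
set_option maxHeartbeats 1600000 in
/-- A nonincreasing nonnegative sequence satisfying
`h_{n+2} ≤ h_n - θ h_{n+2}⁴` converges to zero at an `O(1/n^{1/3})` rate. -/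
theorem nonincreasing_recurrence_one_over_n_cuberoot
    (h : ℕ → ℝ) (hpos : ∀ n ≥ 1, 0 ≤ h n)
    (hmono : ∀ n ≥ 1, h (n + 1) ≤ h n)
    (θ : ℝ) (hθ : 0 < θ)
    (hrec : ∀ n ≥ 1, h (n + 2) ≤ h n - θ * h (n + 2) ^ 4) :
    ∃ M > (0 : ℝ), ∀ n ≥ 1, h n ≤ M / (n : ℝ) ^ ((1 : ℝ) / 3) := by
  -- monotone chain
  have hchain : ∀ m n : ℕ, 1 ≤ m → m ≤ n → h n ≤ h m := by
    intro m n hm hmn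
    induction n with
    | zero => omega
    | succ k ih =>
      rcases Nat.lt_or_ge m (k+1) with hlt | hge
      · have hk : m ≤ k := by omega
        exact le_trans (hmono k (by omega)) (ih hk)
      · have : m = k + 1 := by omega
        subst this; exact le_rfl
  have h1nn : 0 ≤ h 1 := hpos 1 le_rfl
  by_cases h1z : h 1 = 0
  · refine ⟨1, one_pos, fun n hn => ?_⟩
    have hz : h n ≤ 0 := by
      have := hchain 1 n le_rfl hn
      rw [h1z] at this; exact this
    have : (0:ℝ) < (n:ℝ) ^ ((1:ℝ)/3) := by
      apply Real.rpow_pos_of_pos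
      exact_mod_cast Nat.pos_of_ne_zero (by omega)
    have : (0:ℝ) ≤ 1 / (n:ℝ) ^ ((1:ℝ)/3) := by positivity
    linarith
  have h1pos : 0 < h 1 := lt_of_le_of_ne h1nn (Ne.symm h1z)
  set c : ℝ := min (1 / (h 1)^3) (θ/8) with hc
  have hcpos : 0 < c := by
    apply lt_min
    · positivity
    · positivity
  have hc1 : c * (h 1)^3 ≤ 1 := by
    have : c ≤ 1 / (h 1)^3 := min_le_left _ _
    have h13 : (0:ℝ) < (h 1)^3 := by positivity
    calc c * (h 1)^3 ≤ (1 / (h 1)^3) * (h 1)^3 := by nlinarith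
    _ = 1 := by field_simp
  have hcθ : c ≤ θ/8 := min_le_right _ _
  -- main induction
  have key : ∀ k : ℕ, c * k * h (2*k+1) ^ 3 ≤ 1 := by
    intro k
    induction k with
    | zero => simp
    | succ k ih =>
      set a := h (2*k+1) with ha
      have hidx : 2*(k+1)+1 = (2*k+1) + 2 := by ring
      set b := h (2*(k+1)+1) with hb
      have hban : b ≤ a := by
        rw [hb, hidx]
        calc h (2*k+1+2) ≤ h (2*k+1+1) := hmono _ (by omega)
        _ ≤ h (2*k+1) := hmono _ (by omega)
      have hbnn : 0 ≤ b := hpos _ (by omega)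
      have hann : 0 ≤ a := hpos _ (by omega)
      have hah1 : a ≤ h 1 := hchain 1 _ le_rfl (by omega)
      have hbh1 : b ≤ h 1 := le_trans hban hah1
      have hrec' : b ≤ a - θ * b ^ 4 := by
        rw [hb, hidx]; exact hrec (2*k+1) (by omega)
      have hka : c * k * a ^ 3 ≤ 1 := ih
      have hknn : (0:ℝ) ≤ (k:ℕ) := Nat.cast_nonneg k
      push_cast
      have hah13 : a^3 ≤ (h 1)^3 := pow_le_pow_left₀ hann hah1 3
      have hbh13 : b^3 ≤ (h 1)^3 := pow_le_pow_left₀ hbnn hbh1 3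
      rcases le_or_gt b (a/2) with hcase | hcase
      · -- small case
        have hb3' : b^3 ≤ (a/2)^3 := pow_le_pow_left₀ hbnn hcase 3
        have hb3 : b^3 ≤ a^3/8 := by nlinarith [hb3']
        have hx1 : c * ↑k * b^3 ≤ c * ↑k * (a^3/8) := by
          apply mul_le_mul_of_nonneg_left hb3 (by positivity)
        have hx2 : c * b^3 ≤ c * ((h 1)^3 / 8) := by
          apply mul_le_mul_of_nonneg_left (by linarith) hcpos.le
        have he : c * (↑k+1) * b^3 = c * ↑k * b^3 + c * b^3 := by ring
        nlinarith [he]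
      · -- large case
        have hbpos : 0 < b := by linarith
        have hapos : 0 < a := by linarith
        have hdiff : a^3 - b^3 ≥ θ * b^6 := by
          nlinarith [sq_nonneg (a-b), sq_nonneg b, mul_pos hbpos hbpos]
        have ha3b3 : a^3 < 8 * b^3 := by
          have := pow_lt_pow_left₀ (show a < 2*b by linarith) hann (by norm_num : 3 ≠ 0)
          nlinarith [this]
        have hcab : c * a^3 * b^3 ≤ θ * b^6 := by
          have hca : c * a^3 ≤ θ * b^3 := by
            have s1 : c * a^3 ≤ (θ/8) * a^3 :=
              mul_le_mul_of_nonneg_right hcθ (pow_nonneg hann 3)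
            have s2 : (θ/8) * a^3 ≤ (θ/8) * (8*b^3) :=
              mul_le_mul_of_nonneg_left ha3b3.le (by positivity)
            calc c * a^3 ≤ (θ/8) * a^3 := s1
            _ ≤ (θ/8) * (8*b^3) := s2
            _ = θ * b^3 := by ring
          calc c * a^3 * b^3 ≤ θ * b^3 * b^3 :=
              mul_le_mul_of_nonneg_right hca (pow_nonneg hbnn 3)
          _ = θ * b^6 := by ring
        have hstep : b^3 ≤ a^3 - c * a^3 * b^3 := by linarith
        have hcb1 : c * b^3 ≤ 1 := by
          have : c * b^3 ≤ c * (h 1)^3 :=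
            mul_le_mul_of_nonneg_left hbh13 hcpos.le
          linarith
        have hx1 : c * ↑k * b^3 ≤ c * ↑k * (a^3 - c * a^3 * b^3) :=
          mul_le_mul_of_nonneg_left hstep (by positivity)
        have hx2 : c * ↑k * (a^3 - c * a^3 * b^3) ≤ 1 * (1 - c * b^3) := by
          have he : c * ↑k * (a^3 - c * a^3 * b^3) = (c * ↑k * a^3) * (1 - c*b^3) := by ring
          rw [he]
          exact mul_le_mul_of_nonneg_right hka (by linarith)
        have he : c * (↑k+1) * b^3 = c * ↑k * b^3 + c * b^3 := by ring
        nlinarith [he]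
  -- translate to all n
  have key2 : ∃ K > (0:ℝ), ∀ n : ℕ, 1 ≤ n → (n:ℝ) * h n ^ 3 ≤ K := by
    refine ⟨max (4/c) (2 * (h 1)^3 + 1), lt_of_lt_of_le (by positivity) (le_max_right _ _), ?_⟩
    intro n hn
    rcases le_or_gt n 2 with hsmall | hbig
    · have hh1 : h n ≤ h 1 := hchain 1 n le_rfl hn
      have hnn : 0 ≤ h n := hpos n hn
      have hbound : (n:ℝ) * h n ^3 ≤ 2 * (h 1)^3 := by
        have hn2 : (n:ℝ) ≤ 2 := by exact_mod_cast hsmall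
        have hp3 := pow_le_pow_left₀ hnn hh1 3
        calc (n:ℝ) * h n ^3 ≤ 2 * h n ^3 :=
            mul_le_mul_of_nonneg_right hn2 (pow_nonneg hnn 3)
        _ ≤ 2 * (h 1)^3 := by linarith
      exact le_trans (by linarith) (le_max_right _ _)
    · obtain ⟨k, hk1, hkle, hkge⟩ : ∃ k, 1 ≤ k ∧ 2*k+1 ≤ n ∧ n ≤ 4*k :=
        ⟨(n-1)/2, by omega, by omega, by omega⟩
      have hhn : h n ≤ h (2*k+1) := hchain (2*k+1) n (by omega) hkle
      have hnn : 0 ≤ h n := hpos n (by omega)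
      have hh3 : h n ^ 3 ≤ h (2*k+1) ^ 3 := pow_le_pow_left₀ hnn hhn 3
      have hn4k : (n:ℝ) ≤ 4 * k := by exact_mod_cast hkge
      have hknn : (0:ℝ) ≤ (k:ℝ) := Nat.cast_nonneg k
      have hstep1 : (n:ℝ) * h n ^3 ≤ (4*(k:ℝ)) * h (2*k+1)^3 := by
        have t1 : (n:ℝ) * h n ^3 ≤ (4*(k:ℝ)) * h n ^3 :=
          mul_le_mul_of_nonneg_right hn4k (pow_nonneg hnn 3)
        have t2 : (4*(k:ℝ)) * h n ^3 ≤ (4*(k:ℝ)) * h (2*k+1)^3 :=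
          mul_le_mul_of_nonneg_left hh3 (by positivity)
        linarith
      have hfin : (k:ℝ) * h (2*k+1)^3 ≤ 1/c := by
        rw [div_eq_inv_mul, le_inv_mul_iff₀ hcpos]
        have he : c * ((k:ℝ) * h (2*k+1)^3) = c * (k:ℝ) * h (2*k+1)^3 := by ring
        rw [he]; exact key k
      refine le_trans ?_ (le_max_left _ _)
      calc (n:ℝ) * h n ^3 ≤ (4*(k:ℝ)) * h (2*k+1)^3 := hstep1
      _ = 4 * ((k:ℝ) * h (2*k+1)^3) := by ring
      _ ≤ 4 * (1/c) := by linarith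
      _ = 4/c := by ring
  obtain ⟨K, hKpos, hK⟩ := key2
  refine ⟨K ^ ((1:ℝ)/3), Real.rpow_pos_of_pos hKpos _, fun n hn => ?_⟩
  have hnpos : (0:ℝ) < (n:ℝ) := by exact_mod_cast Nat.pos_of_ne_zero (by omega)
  have hnn : 0 ≤ h n := hpos n hn
  have hcube : h n ^ 3 ≤ K / n := by
    rw [le_div_iff₀ hnpos]
    linarith [hK n hn, mul_comm (h n ^3) (n:ℝ)]
  have hKn : (0:ℝ) ≤ K / n := by positivity
  have := Real.rpow_le_rpow (by positivity) hcube (by norm_num : (0:ℝ) ≤ 1/3)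
  calc h n = (h n ^ 3) ^ ((1:ℝ)/3) := by
        rw [← Real.rpow_natCast (h n) 3, ← Real.rpow_mul hnn]
        norm_num
    _ ≤ (K / n) ^ ((1:ℝ)/3) := this
    _ = K ^ ((1:ℝ)/3) / (n:ℝ) ^ ((1:ℝ)/3) := Real.div_rpow hKpos.le hnpos.le _
end
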